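/- arXiv:1005.1059 — 6 statements merged into one kernel-verified Lean document; each statement's English description precedes it below -/
import Mathlib

section
/- If the sequences (q^i) and (m^i) satisfy the relaxed IC constraint and the IR constraint, then Σ_{i=1}^K p^i·m^i ≤ Σ_{i=1}^K p^i·q^i·w^i. -/
/-!
With the buyer's utility `u i = q i * x i - m i`, incentive compatibility between neighbouring
types gives `u (i + 1) ≥ u i + q i * (x (i + 1) - x i)`, and individual rationality gives
`u 1 ≥ 0`; so each type keeps at least the information rent `∑_{j < i} q j * (x (j + 1) - x j)`.
Averaging over `p` and exchanging the order of summation, the expected rent is exactly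
`∑ p i * q i * (x i - w i)`, which is the gap between the expected welfare and the expected
virtual surplus.
-/

open Finset

lemma sum_Ico_le_of_add_le_succ {α : Type*} [AddCommMonoid α] [PartialOrder α]
    [IsOrderedAddMonoid α] {u a : ℕ → α} {K : ℕ} (h1 : 0 ≤ u 1)
    (hstep : ∀ i, 1 ≤ i → i < K → u i + a i ≤ u (i + 1)) :
    ∀ i, 1 ≤ i → i ≤ K → ∑ j ∈ Ico 1 i, a j ≤ u i := by
  intro i hi
  induction i, hi using Nat.le_induction with
  | base => simpa using fun _ ↦ h1
  | succ n hn ih =>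
    intro hnK
    rw [sum_Ico_succ_top hn]
    exact (add_le_add (ih (by omega)) le_rfl).trans (hstep n hn hnK)

lemma sum_mul_sum_Icc_succ_eq_sum_mul_sum_Ico {R : Type*} [CommSemiring R] (a p : ℕ → R)
    (K : ℕ) :
    ∑ j ∈ Icc 1 K, a j * ∑ i ∈ Icc (j + 1) K, p i =
      ∑ i ∈ Icc 1 K, p i * ∑ j ∈ Ico 1 i, a j := by
  simp only [mul_sum]
  refine (sum_comm' fun j i ↦ ?_).trans <|
    sum_congr rfl fun _ _ ↦ sum_congr rfl fun _ _ ↦ mul_comm _ _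
  simp only [mem_Icc, mem_Ico]
  omega

lemma sum_Ico_rent_le_utility (K : ℕ) (x q m : ℕ → ℝ)
    (hIC : ∀ i j, 1 ≤ i → i ≤ K → 1 ≤ j → j ≤ K →
      q i * x i - m i ≥ q j * x i - m j)
    (hIR : ∀ i, 1 ≤ i → i ≤ K → q i * x i - m i ≥ 0)
    {i : ℕ} (hi : 1 ≤ i) (hiK : i ≤ K) :
    ∑ j ∈ Ico 1 i, q j * (x (j + 1) - x j) ≤ q i * x i - m i := by
  refine sum_Ico_le_of_add_le_succ (u := fun i ↦ q i * x i - m i) (hIR 1 le_rfl (hi.trans hiK))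
    (fun n hn hnK ↦ ?_) i hi hiK
  have := hIC (n + 1) n (by omega) hnK hn hnK.le
  linarith

lemma mul_virtual_value_eq (K : ℕ) (x p w : ℕ → ℝ)
    (hw : ∀ i, 1 ≤ i → i ≤ K - 1 →
      w i = x i - (x (i + 1) - x i) * (∑ j ∈ Icc (i + 1) K, p j) / p i)
    (hwK : w K = x K) {i : ℕ} (hi : 1 ≤ i) (hiK : i ≤ K) (hpi : p i ≠ 0) :
    p i * w i = p i * x i - (x (i + 1) - x i) * ∑ j ∈ Icc (i + 1) K, p j := by
  obtain hlt | rfl := hiK.lt_or_eq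
  · rw [hw i hi (by omega)]
    field_simp
  · -- at `i = K` the tail `Icc (K + 1) K` is empty, so the formula reduces to `hwK`
    simp [hwK]

theorem stmt_2_general (K : ℕ) (x q m p w : ℕ → ℝ)
    (hp : ∀ i, 1 ≤ i → i ≤ K → 0 < p i)
    (hw : ∀ i, 1 ≤ i → i ≤ K - 1 →
      w i = x i - (x (i + 1) - x i) * (∑ j ∈ Finset.Icc (i + 1) K, p j) / p i)
    (hwK : w K = x K)
    (hIC : ∀ i j, 1 ≤ i → i ≤ K → 1 ≤ j → j ≤ K →
      q i * x i - m i ≥ q j * x i - m j)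
    (hIR : ∀ i, 1 ≤ i → i ≤ K → q i * x i - m i ≥ 0) :
    ∑ i ∈ Finset.Icc 1 K, p i * m i ≤ ∑ i ∈ Finset.Icc 1 K, p i * q i * w i := by
  calc ∑ i ∈ Icc 1 K, p i * m i
      = ∑ i ∈ Icc 1 K, p i * q i * x i - ∑ i ∈ Icc 1 K, p i * (q i * x i - m i) := by
        rw [← sum_sub_distrib]
        exact sum_congr rfl fun i _ ↦ by ring
    _ ≤ ∑ i ∈ Icc 1 K, p i * q i * x i -
          ∑ i ∈ Icc 1 K, p i * ∑ j ∈ Ico 1 i, q j * (x (j + 1) - x j) := by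
        refine sub_le_sub_left (sum_le_sum fun i hi ↦ ?_) _
        rw [mem_Icc] at hi
        exact mul_le_mul_of_nonneg_left (sum_Ico_rent_le_utility K x q m hIC hIR hi.1 hi.2)
          (hp i hi.1 hi.2).le
    _ = ∑ i ∈ Icc 1 K, p i * q i * x i -
          ∑ j ∈ Icc 1 K, q j * (x (j + 1) - x j) * ∑ i ∈ Icc (j + 1) K, p i := by
        rw [sum_mul_sum_Icc_succ_eq_sum_mul_sum_Ico]
    _ = ∑ i ∈ Icc 1 K, p i * q i * w i := by
        rw [← sum_sub_distrib]
        refine sum_congr rfl fun i hi ↦ ?_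
        rw [mem_Icc] at hi
        linear_combination
          -q i * mul_virtual_value_eq K x p w hw hwK hi.1 hi.2 (hp i hi.1 hi.2).ne'

/-- Under the relaxed IC and IR constraints,
Σ p^i·m^i ≤ Σ p^i·q^i·w^i, where w is the virtual valuation. -/
theorem stmt_2 (K : ℕ) (hK : 1 ≤ K) (x q m p w : ℕ → ℝ)
    (hx0 : 0 ≤ x 1)
    (hxlt : ∀ i, 1 ≤ i → i < K → x i < x (i + 1))
    (hp : ∀ i, 1 ≤ i → i ≤ K → 0 < p i)
    (hp1 : ∑ i ∈ Finset.Icc 1 K, p i = 1)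
    (hw : ∀ i, 1 ≤ i → i ≤ K - 1 →
      w i = x i - (x (i + 1) - x i) * (∑ j ∈ Finset.Icc (i + 1) K, p j) / p i)
    (hwK : w K = x K)
    (hIC : ∀ i j, 1 ≤ i → i ≤ K → 1 ≤ j → j ≤ K →
      q i * x i - m i ≥ q j * x i - m j)
    (hIR : ∀ i, 1 ≤ i → i ≤ K → q i * x i - m i ≥ 0) :
    ∑ i ∈ Finset.Icc 1 K, p i * m i ≤ ∑ i ∈ Finset.Icc 1 K, p i * q i * w i :=
  stmt_2_general K x q m p w hp hw hwK hIC hIR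
end

section
/- Suppose 0 ≤ q^1 ≤ q^2 ≤ … ≤ q^K and define m^i = Σ_{j=1}^i (q^j − q^{j−1})·x^j for 1 ≤ i ≤ K, with the convention q^0 = 0. Then (q^i) and (m^i) satisfy the relaxed IC constraint and the IR constraint, and Σ_{i=1}^K p^i·m^i = Σ_{i=1}^K p^i·q^i·w^i. -/
/-!
Write `d k = q k - q (k - 1) ≥ 0` for the increments of the allocation. Between two types
`a ≤ b` the payment grows by `∑_{a < k ≤ b} d k * x k`, an average of values in `[x a, x b]`
with total weight `q b - q a`; this two-sided bound is exactly incentive compatibility, and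
individual rationality is its case `a = 0` (where `q 0 = 0` and the payment is `0`).
For the revenue, exchanging the order of summation gives `∑ p i * m i = ∑ d j * R j` with
`R j = x j * P(value ≥ x j)`, and summation by parts turns this into `∑ q j * (R j - R (j + 1))`,
where `R j - R (j + 1) = p j * w j`.
-/

open Finset

def myersonPayment (q x : ℕ → ℝ) (i : ℕ) : ℝ :=
  ∑ j ∈ Icc 1 i, (q j - q (j - 1)) * x j

def upperTail (p : ℕ → ℝ) (K j : ℕ) : ℝ :=
  ∑ i ∈ Icc j K, p i

/-- At `i = K` the tail sum is empty, so this is `x K`, as in the paper's separate definition. -/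
noncomputable def virtualValue (x p : ℕ → ℝ) (K i : ℕ) : ℝ :=
  x i - (x (i + 1) - x i) * upperTail p K (i + 1) / p i

theorem sum_Ioc_sub_pred (f : ℕ → ℝ) {a b : ℕ} (hab : a ≤ b) :
    ∑ k ∈ Ioc a b, (f k - f (k - 1)) = f b - f a := by
  induction b, hab using Nat.le_induction with
  | base => simp
  | succ b hab ih => rw [sum_Ioc_succ_top hab, ih, Nat.add_sub_cancel]; ring

theorem sum_Icc_one_sub_pred_mul (f g : ℕ → ℝ) (n : ℕ) :
    ∑ j ∈ Icc 1 n, (f j - f (j - 1)) * g j =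
      ∑ j ∈ Icc 1 n, f j * (g j - g (j + 1)) + f n * g (n + 1) - f 0 * g 1 := by
  induction n with
  | zero => simp
  | succ n ih =>
    rw [sum_Icc_succ_top (by omega), sum_Icc_succ_top (by omega), ih, Nat.add_sub_cancel]
    ring

section Payment

variable {q x : ℕ → ℝ} {a b : ℕ}

theorem myersonPayment_sub (hab : a ≤ b) :
    myersonPayment q x b - myersonPayment q x a = ∑ k ∈ Ioc a b, (q k - q (k - 1)) * x k := by
  have hIoc (n : ℕ) : Icc 1 n = Ioc 0 n := Icc_add_one_left_eq_Ioc 0 n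
  rw [myersonPayment, myersonPayment, hIoc, hIoc, ← sum_Ioc_consecutive _ (Nat.zero_le a) hab, add_sub_cancel_left]

theorem mul_le_myersonPayment_sub (hab : a ≤ b) (hq : MonotoneOn q (Set.Icc a b))
    (hx : MonotoneOn x (Set.Icc a b)) :
    (q b - q a) * x a ≤ myersonPayment q x b - myersonPayment q x a := by
  rw [myersonPayment_sub hab, ← sum_Ioc_sub_pred q hab, sum_mul]
  refine sum_le_sum fun k hk => ?_
  obtain ⟨hak, hkb⟩ := mem_Ioc.1 hk
  refine mul_le_mul_of_nonneg_left ?_ (sub_nonneg.2 ?_)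
  · exact hx ⟨le_rfl, hab⟩ ⟨hak.le, hkb⟩ hak.le
  · exact hq ⟨by omega, by omega⟩ ⟨hak.le, hkb⟩ (Nat.sub_le k 1)

theorem myersonPayment_sub_le_mul (hab : a ≤ b) (hq : MonotoneOn q (Set.Icc a b))
    (hx : MonotoneOn x (Set.Ioc a b)) :
    myersonPayment q x b - myersonPayment q x a ≤ (q b - q a) * x b := by
  rw [myersonPayment_sub hab, ← sum_Ioc_sub_pred q hab, sum_mul]
  refine sum_le_sum fun k hk => ?_
  obtain ⟨hak, hkb⟩ := mem_Ioc.1 hk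
  refine mul_le_mul_of_nonneg_left ?_ (sub_nonneg.2 ?_)
  · exact hx ⟨hak, hkb⟩ ⟨hak.trans_le hkb, le_rfl⟩ hkb
  · exact hq ⟨by omega, by omega⟩ ⟨hak.le, hkb⟩ (Nat.sub_le k 1)

theorem myersonPayment_incentiveCompatible {K i j : ℕ} (hq : MonotoneOn q (Set.Icc 1 K))
    (hx : MonotoneOn x (Set.Icc 1 K)) (hi : i ∈ Set.Icc 1 K) (hj : j ∈ Set.Icc 1 K) :
    q j * x i - myersonPayment q x j ≤ q i * x i - myersonPayment q x i := by
  rcases le_total j i with hji | hij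
  · have := myersonPayment_sub_le_mul hji (hq.mono (Set.Icc_subset_Icc hj.1 hi.2))
      (hx.mono (Set.Ioc_subset_Icc_self.trans (Set.Icc_subset_Icc hj.1 hi.2)))
    linarith
  · have := mul_le_myersonPayment_sub hij (hq.mono (Set.Icc_subset_Icc hi.1 hj.2))
      (hx.mono (Set.Icc_subset_Icc hi.1 hj.2))
    linarith

theorem myersonPayment_le_mul (hq0 : q 0 = 0) (hq : MonotoneOn q (Set.Icc 0 b))
    (hx : MonotoneOn x (Set.Ioc 0 b)) :
    myersonPayment q x b ≤ q b * x b := by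
  simpa [hq0, myersonPayment] using myersonPayment_sub_le_mul (Nat.zero_le b) hq hx

end Payment

section Revenue

variable {p q x : ℕ → ℝ} {K : ℕ}

theorem upperTail_of_lt {j : ℕ} (h : K < j) : upperTail p K j = 0 := by
  rw [upperTail, Icc_eq_empty_of_lt h, sum_empty]

theorem upperTail_eq_add {j : ℕ} (h : j ≤ K) : upperTail p K j = p j + upperTail p K (j + 1) := by
  rw [upperTail, upperTail, Icc_eq_cons_Ioc h, sum_cons, Icc_add_one_left_eq_Ioc]

theorem mul_virtualValue {i : ℕ} (hp : p i ≠ 0) (hi : i ≤ K) :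
    p i * virtualValue x p K i = x i * upperTail p K i - x (i + 1) * upperTail p K (i + 1) := by
  rw [virtualValue, upperTail_eq_add hi]
  field_simp
  ring

theorem sum_mul_myersonPayment :
    ∑ i ∈ Icc 1 K, p i * myersonPayment q x i =
      ∑ j ∈ Icc 1 K, (q j - q (j - 1)) * (x j * upperTail p K j) := by
  simp only [myersonPayment, upperTail, mul_sum]
  rw [sum_comm' (t' := Icc 1 K) (s' := fun j => Icc j K) (by intro i j; simp only [mem_Icc]; omega)]
  exact sum_congr rfl fun j _ => sum_congr rfl fun i _ => by ring

theorem sum_mul_myersonPayment_eq_sum_mul_virtualValue (hq0 : q 0 = 0)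
    (hp : ∀ i ∈ Icc 1 K, p i ≠ 0) :
    ∑ i ∈ Icc 1 K, p i * myersonPayment q x i = ∑ i ∈ Icc 1 K, p i * q i * virtualValue x p K i := by
  rw [sum_mul_myersonPayment, sum_Icc_one_sub_pred_mul q (fun j => x j * upperTail p K j),
    upperTail_of_lt (Nat.lt_add_one K), hq0, mul_zero, mul_zero, zero_mul, add_zero, sub_zero]
  refine sum_congr rfl fun i hi => ?_
  rw [mul_comm (p i), mul_assoc, mul_virtualValue (hp i hi) (mem_Icc.1 hi).2]

end Revenue

theorem stmt_3_general (K : ℕ) (x q m p w : ℕ → ℝ)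
    (hxlt : ∀ i, 1 ≤ i → i < K → x i < x (i + 1))
    (hp : ∀ i, 1 ≤ i → i ≤ K → 0 < p i)
    (hw : ∀ i, 1 ≤ i → i ≤ K - 1 →
      w i = x i - (x (i + 1) - x i) * (∑ j ∈ Finset.Icc (i + 1) K, p j) / p i)
    (hwK : w K = x K)
    (hq0 : q 0 = 0)
    (hq1 : 0 ≤ q 1)
    (hqmono : ∀ i, 1 ≤ i → i ≤ K - 1 → q i ≤ q (i + 1))
    (hm : ∀ i, 1 ≤ i → i ≤ K →
      m i = ∑ j ∈ Finset.Icc 1 i, (q j - q (j - 1)) * x j) :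
    (∀ i j, 1 ≤ i → i ≤ K → 1 ≤ j → j ≤ K →
      q i * x i - m i ≥ q j * x i - m j) ∧
    (∀ i, 1 ≤ i → i ≤ K → q i * x i - m i ≥ 0) ∧
    ∑ i ∈ Finset.Icc 1 K, p i * m i = ∑ i ∈ Finset.Icc 1 K, p i * q i * w i := by
  have hx : MonotoneOn x (Set.Icc 1 K) := (strictMonoOn_of_lt_add_one Set.ordConnected_Icc
    fun a _ ha ha' => hxlt a ha.1 ha'.2).monotoneOn
  have hq : MonotoneOn q (Set.Icc 0 K) := monotoneOn_of_le_add_one Set.ordConnected_Icc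
    fun a _ _ ha' => by
      rcases a with _ | a
      · simpa [hq0] using hq1
      · exact hqmono (a + 1) (by omega) (by have := ha'.2; omega)
  have hw' : ∀ i ∈ Icc 1 K, w i = virtualValue x p K i := fun i hi => by
    obtain ⟨hi1, hiK⟩ := mem_Icc.1 hi
    rcases hiK.lt_or_eq with hiK | rfl
    · exact hw i hi1 (by omega)
    · rw [hwK, virtualValue, upperTail_of_lt (Nat.lt_add_one i), mul_zero, zero_div, sub_zero]
  refine ⟨fun i j hi hiK hj hjK => ?_, fun i hi hiK => ?_, ?_⟩
  · rw [hm i hi hiK, hm j hj hjK]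
    exact myersonPayment_incentiveCompatible (hq.mono (Set.Icc_subset_Icc (Nat.zero_le 1) le_rfl))
      hx ⟨hi, hiK⟩ ⟨hj, hjK⟩
  · rw [hm i hi hiK, ge_iff_le, sub_nonneg]
    exact myersonPayment_le_mul hq0 (hq.mono (Set.Icc_subset_Icc le_rfl hiK))
      (hx.mono fun k hk => ⟨hk.1, hk.2.trans hiK⟩)
  · calc ∑ i ∈ Icc 1 K, p i * m i = ∑ i ∈ Icc 1 K, p i * myersonPayment q x i :=
          sum_congr rfl fun i hi => by rw [hm i (mem_Icc.1 hi).1 (mem_Icc.1 hi).2, myersonPayment]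
      _ = ∑ i ∈ Icc 1 K, p i * q i * virtualValue x p K i :=
          sum_mul_myersonPayment_eq_sum_mul_virtualValue hq0
            fun i hi => (hp i (mem_Icc.1 hi).1 (mem_Icc.1 hi).2).ne'
      _ = ∑ i ∈ Icc 1 K, p i * q i * w i := sum_congr rfl fun i hi => by rw [hw' i hi]

/-- If 0 ≤ q^1 ≤ … ≤ q^K and m^i = Σ_{j=1}^i (q^j − q^{j−1})·x^j
(with q^0 = 0), then (q^i), (m^i) satisfy the relaxed IC and IR constraints,
and Σ p^i·m^i = Σ p^i·q^i·w^i. -/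
theorem stmt_3 (K : ℕ) (hK : 1 ≤ K) (x q m p w : ℕ → ℝ)
    (hx0 : 0 ≤ x 1)
    (hxlt : ∀ i, 1 ≤ i → i < K → x i < x (i + 1))
    (hp : ∀ i, 1 ≤ i → i ≤ K → 0 < p i)
    (hp1 : ∑ i ∈ Finset.Icc 1 K, p i = 1)
    (hw : ∀ i, 1 ≤ i → i ≤ K - 1 →
      w i = x i - (x (i + 1) - x i) * (∑ j ∈ Finset.Icc (i + 1) K, p j) / p i)
    (hwK : w K = x K)
    (hq0 : q 0 = 0)
    (hq1 : 0 ≤ q 1)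
    (hqmono : ∀ i, 1 ≤ i → i ≤ K - 1 → q i ≤ q (i + 1))
    (hm : ∀ i, 1 ≤ i → i ≤ K →
      m i = ∑ j ∈ Finset.Icc 1 i, (q j - q (j - 1)) * x j) :
    (∀ i j, 1 ≤ i → i ≤ K → 1 ≤ j → j ≤ K →
      q i * x i - m i ≥ q j * x i - m j) ∧
    (∀ i, 1 ≤ i → i ≤ K → q i * x i - m i ≥ 0) ∧
    ∑ i ∈ Finset.Icc 1 K, p i * m i = ∑ i ∈ Finset.Icc 1 K, p i * q i * w i :=
  stmt_3_general K x q m p w hxlt hp hw hwK hq0 hq1 hqmono hm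
end

section
/- If q^1 ≤ q^2 ≤ … ≤ q^K are reals, then Σ_{i=1}^K p^i·q^i·w^i ≤ Σ_{i=1}^K p^i·q^i·w̄^i. -/
/-!
With `d = h̄ - h ≤ 0`, the identities `p^i w^i = h^i - h^{i-1}` and `p^i w̄^i = h̄^i - h̄^{i-1}`
turn the difference of the two sides into `∑ q^i (d^i - d^{i-1})`. Since `g` is strictly
increasing, `(g^0, h^0)` and `(g^K, h^K)` are exposed points of the hull, so `d` vanishes at both
ends, and summation by parts rewrites the sum as `∑_{0<i<K} (q^i - q^{i+1}) d^i ≥ 0`.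
-/

open Finset

section ExposedPoint

variable {𝕜 E : Type*} [Field 𝕜] [LinearOrder 𝕜] [IsStrictOrderedRing 𝕜]
  [AddCommGroup E] [Module 𝕜 E]

theorem eq_of_mem_convexHull_of_apply_le (f : E →ₗ[𝕜] 𝕜) {S : Set E} {P₀ P : E}
    (hP₀ : P₀ ∈ S) (hlt : ∀ Q ∈ S, Q ≠ P₀ → f P₀ < f Q)
    (hP : P ∈ convexHull 𝕜 S) (hfP : f P ≤ f P₀) : P = P₀ := by
  rw [← Set.insert_sdiff_self_of_mem hP₀] at hP
  rcases (S \ {P₀}).eq_empty_or_nonempty with hT | hT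
  · rwa [hT, insert_empty_eq, convexHull_singleton] at hP
  rw [convexHull_insert hT, convexJoin_singleton_left, Set.mem_iUnion₂] at hP
  obtain ⟨t, ht, a, b, ha, hb, hab, rfl⟩ := hP
  have hft : f P₀ < f t :=
    convexHull_min (fun Q hQ ↦ hlt Q hQ.1 hQ.2) (convex_halfSpace_gt f.isLinear _) ht
  have hb0 : b = 0 := by
    simp only [map_add, map_smul, smul_eq_mul] at hfP
    obtain rfl : a = 1 - b := by linarith
    have : b * (f t - f P₀) ≤ 0 := by linarith
    exact le_antisymm (nonpos_of_mul_nonpos_left this (sub_pos.mpr hft)) hb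
  obtain rfl : a = 1 := by linarith
  simp [hb0]

end ExposedPoint

section LowerHull

variable {K i : ℕ} {g h : ℕ → ℝ} {b : ℝ}

theorem le_of_isLeast_convexHull (hi : i ≤ K)
    (hb : IsLeast {y : ℝ | ((g i, y) : ℝ × ℝ) ∈
      convexHull ℝ {P : ℝ × ℝ | ∃ j ≤ K, P = (g j, h j)}} b) : b ≤ h i :=
  hb.2 (subset_convexHull ℝ _ ⟨i, hi, rfl⟩)

theorem eq_of_mem_convexHull_of_forall_lt (hi : i ≤ K) (hlt : ∀ j ≤ K, j ≠ i → g i < g j)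
    (hb : ((g i, b) : ℝ × ℝ) ∈ convexHull ℝ {P : ℝ × ℝ | ∃ j ≤ K, P = (g j, h j)}) :
    b = h i := by
  refine (Prod.ext_iff.mp (eq_of_mem_convexHull_of_apply_le (LinearMap.fst ℝ ℝ ℝ)
    (P₀ := (g i, h i)) ?_ ?_ hb le_rfl)).2
  · exact ⟨i, hi, rfl⟩
  rintro _ ⟨j, hj, rfl⟩ hne
  exact hlt j hj (by rintro rfl; exact hne rfl)

theorem eq_of_mem_convexHull_of_forall_gt (hi : i ≤ K) (hgt : ∀ j ≤ K, j ≠ i → g j < g i)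
    (hb : ((g i, b) : ℝ × ℝ) ∈ convexHull ℝ {P : ℝ × ℝ | ∃ j ≤ K, P = (g j, h j)}) :
    b = h i := by
  refine (Prod.ext_iff.mp (eq_of_mem_convexHull_of_apply_le (-LinearMap.fst ℝ ℝ ℝ)
    (P₀ := (g i, h i)) ?_ ?_ hb le_rfl)).2
  · exact ⟨i, hi, rfl⟩
  rintro _ ⟨j, hj, rfl⟩ hne
  simpa using hgt j hj (by rintro rfl; exact hne rfl)

end LowerHull

theorem sum_Icc_one_eq_sum_range {M : Type*} [AddCommMonoid M] (f : ℕ → M) (n : ℕ) :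
    ∑ i ∈ Icc 1 n, f i = ∑ i ∈ range n, f (i + 1) := by
  induction n with
  | zero => simp
  | succ n ih => rw [sum_Icc_succ_top (by omega), ih, sum_range_succ]

theorem sum_Icc_one_lt_sum_Icc_one {K : ℕ} {p : ℕ → ℝ} (hp : ∀ i, 1 ≤ i → i ≤ K → 0 < p i)
    {i j : ℕ} (hij : i < j) (hj : j ≤ K) : ∑ l ∈ Icc 1 i, p l < ∑ l ∈ Icc 1 j, p l :=
  sum_lt_sum_of_subset (Icc_subset_Icc_right hij.le) (by simp; omega) (by simp; omega)
    (hp j (by omega) hj) fun l hl _ ↦ (hp l (mem_Icc.mp hl).1 ((mem_Icc.mp hl).2.trans hj)).le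

theorem sum_range_mul_sub_add_sum_range_sub_mul {R : Type*} [CommRing R] (q d : ℕ → R) (n : ℕ) :
    ∑ i ∈ range n, q (i + 1) * (d (i + 1) - d i) + ∑ i ∈ range n, (q (i + 1) - q i) * d i =
      q n * d n - q 0 * d 0 := by
  rw [← sum_add_distrib, ← sum_range_sub (fun i ↦ q i * d i)]
  exact sum_congr rfl fun i _ ↦ by ring

theorem sum_range_mul_sub_nonneg {K : ℕ} {q d : ℕ → ℝ}
    (hq : ∀ i, 1 ≤ i → i < K → q i ≤ q (i + 1))
    (hd0 : d 0 = 0) (hdK : d K = 0) (hd : ∀ i ≤ K, d i ≤ 0) :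
    0 ≤ ∑ i ∈ range K, q (i + 1) * (d (i + 1) - d i) := by
  have hterm : ∀ i ∈ range K, (q (i + 1) - q i) * d i ≤ 0 := by
    intro i hi
    rcases Nat.eq_zero_or_pos i with rfl | hi1
    · simp [hd0]
    · rw [mem_range] at hi
      exact mul_nonpos_of_nonneg_of_nonpos (sub_nonneg.mpr (hq i hi1 hi)) (hd i hi.le)
  have := sum_range_mul_sub_add_sum_range_sub_mul q d K
  rw [hd0, hdK] at this
  linarith [sum_nonpos hterm]

theorem mul_virtualValuation_eq_sub {K i : ℕ} {x p w h : ℕ → ℝ} (hi : i < K)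
    (hp : p (i + 1) ≠ 0)
    (hw : i + 1 < K → w (i + 1) =
      x (i + 1) - (x (i + 1 + 1) - x (i + 1)) * (∑ j ∈ Icc (i + 1 + 1) K, p j) / p (i + 1))
    (hwK : w K = x K) (hh : ∀ j ≤ K, h j = -x (j + 1) * ∑ l ∈ Icc (j + 1) K, p l) :
    p (i + 1) * w (i + 1) = h (i + 1) - h i := by
  rw [hh (i + 1) hi, hh i hi.le, ← insert_Icc_add_one_left_eq_Icc (show i + 1 ≤ K from hi),
    sum_insert (by simp)]
  rcases (show i + 1 ≤ K from hi).lt_or_eq with hlt | hK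
  · rw [hw hlt]
    field_simp
    ring
  · subst hK
    rw [hwK, Icc_eq_empty (by omega), sum_empty]
    ring

theorem stmt_8_general (K : ℕ) (x p q w : ℕ → ℝ)
    (hp : ∀ i, 1 ≤ i → i ≤ K → 0 < p i)
    (hw : ∀ i, 1 ≤ i → i ≤ K - 1 →
      w i = x i - (x (i + 1) - x i) * (∑ j ∈ Finset.Icc (i + 1) K, p j) / p i)
    (hwK : w K = x K)
    (g h hbar wbar : ℕ → ℝ)
    (hg : ∀ i ≤ K, g i = ∑ j ∈ Finset.Icc 1 i, p j)
    (hh : ∀ i ≤ K, h i = -x (i + 1) * ∑ j ∈ Finset.Icc (i + 1) K, p j)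
    (hbar_min : ∀ i ≤ K, IsLeast {y : ℝ |
        ((g i, y) : ℝ × ℝ) ∈ convexHull ℝ {P : ℝ × ℝ | ∃ j ≤ K, P = (g j, h j)}}
      (hbar i))
    (hwbar : ∀ i, 1 ≤ i → i ≤ K →
      wbar i = (hbar i - hbar (i - 1)) / (g i - g (i - 1)))
    (hqmono : ∀ i, 1 ≤ i → i ≤ K - 1 → q i ≤ q (i + 1)) :
    ∑ i ∈ Finset.Icc 1 K, p i * q i * w i ≤
      ∑ i ∈ Finset.Icc 1 K, p i * q i * wbar i := by
  have hg_lt : ∀ {i j}, i < j → j ≤ K → g i < g j := fun hij hj ↦ by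
    rw [hg _ (hij.le.trans hj), hg _ hj]
    exact sum_Icc_one_lt_sum_Icc_one hp hij hj
  have hbar0 : hbar 0 = h 0 := eq_of_mem_convexHull_of_forall_lt K.zero_le
    (fun j hj hj0 ↦ hg_lt (Nat.pos_of_ne_zero hj0) hj) (hbar_min 0 K.zero_le).1
  have hbarK : hbar K = h K := eq_of_mem_convexHull_of_forall_gt le_rfl
    (fun j hj hjK ↦ hg_lt (lt_of_le_of_ne hj hjK) le_rfl) (hbar_min K le_rfl).1
  have hpw : ∀ i < K, p (i + 1) * w (i + 1) = h (i + 1) - h i := fun i hi ↦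
    mul_virtualValuation_eq_sub hi (hp _ (by omega) hi).ne'
      (fun _ ↦ hw _ (by omega) (by omega)) hwK hh
  have hpwbar : ∀ i < K, p (i + 1) * wbar (i + 1) = hbar (i + 1) - hbar i := fun i hi ↦ by
    have hstep : g (i + 1) - g i = p (i + 1) := by
      rw [hg _ hi, hg _ hi.le, sum_Icc_succ_top (by omega)]
      ring
    rw [hwbar (i + 1) (by omega) hi, Nat.add_sub_cancel, hstep]
    field_simp [(hp _ (by omega) hi).ne']
  rw [← sub_nonneg, ← sum_sub_distrib, sum_Icc_one_eq_sum_range]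
  calc 0 ≤ ∑ i ∈ range K, q (i + 1) * ((hbar (i + 1) - h (i + 1)) - (hbar i - h i)) :=
        sum_range_mul_sub_nonneg (d := fun i ↦ hbar i - h i)
          (fun i hi hiK ↦ hqmono i hi (by omega)) (by simp [hbar0]) (by simp [hbarK])
          fun i hi ↦ sub_nonpos.mpr (le_of_isLeast_convexHull hi (hbar_min i hi))
    _ = _ := sum_congr rfl fun i hi ↦ by
        linear_combination q (i + 1) * (hpw i (mem_range.mp hi) - hpwbar i (mem_range.mp hi))

/-- If q^1 ≤ q^2 ≤ … ≤ q^K, then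
Σ p^i·q^i·w^i ≤ Σ p^i·q^i·w̄^i. -/
theorem stmt_8 (K : ℕ) (hK : 1 ≤ K) (x p q w : ℕ → ℝ)
    (hx0 : 0 ≤ x 1)
    (hxlt : ∀ i, 1 ≤ i → i < K → x i < x (i + 1))
    (hp : ∀ i, 1 ≤ i → i ≤ K → 0 < p i)
    (hp1 : ∑ i ∈ Finset.Icc 1 K, p i = 1)
    (hw : ∀ i, 1 ≤ i → i ≤ K - 1 →
      w i = x i - (x (i + 1) - x i) * (∑ j ∈ Finset.Icc (i + 1) K, p j) / p i)
    (hwK : w K = x K)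
    (g h hbar wbar : ℕ → ℝ)
    (hg : ∀ i ≤ K, g i = ∑ j ∈ Finset.Icc 1 i, p j)
    (hh : ∀ i ≤ K, h i = -x (i + 1) * ∑ j ∈ Finset.Icc (i + 1) K, p j)
    (hbar_min : ∀ i ≤ K, IsLeast {y : ℝ |
        ((g i, y) : ℝ × ℝ) ∈ convexHull ℝ {P : ℝ × ℝ | ∃ j ≤ K, P = (g j, h j)}}
      (hbar i))
    (hwbar : ∀ i, 1 ≤ i → i ≤ K →
      wbar i = (hbar i - hbar (i - 1)) / (g i - g (i - 1)))
    (hqmono : ∀ i, 1 ≤ i → i ≤ K - 1 → q i ≤ q (i + 1)) :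
    ∑ i ∈ Finset.Icc 1 K, p i * q i * w i ≤
      ∑ i ∈ Finset.Icc 1 K, p i * q i * wbar i :=
  stmt_8_general K x p q w hp hw hwK g h hbar wbar hg hh hbar_min hwbar hqmono
end

section
/- The monotone virtual valuation satisfies w̄^i < x^i for all 1 ≤ i ≤ K−1, and w̄^K = x^K. -/
/-!
The lower hull `h̄` is convex, so a line through the hull points at two consecutive nodes lies
below every point `(gʲ, hʲ)`. At `g^{i-1}` this line meets the hull in a convex combination of
points lying on or above it, so it passes through some `(gʲ, hʲ)` with `j ≤ i - 1`. Since
`hʲ = -x^{j+1} (1 - gʲ)`, comparing the line at this touching point with its value at the node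
`K - 1` bounds its slope by `x^{j+1} ≤ xⁱ`, strictly because `x^{j+1} < x^K`.
For the last slope: every point lies on or above the line `y = x^K (g - 1)`, which passes through
the last two points, so these lie on the hull and `w̄^K = x^K`.
-/

open Finset

section PlaneConvexHull

variable {s : Set (ℝ × ℝ)} {c d : ℝ}

theorem convex_setOf_affine_le (c d : ℝ) : Convex ℝ {P : ℝ × ℝ | c * P.1 + d ≤ P.2} := by
  intro P hP Q hQ a b ha hb hab
  simp only [Set.mem_ofPred_eq, Prod.fst_add, Prod.snd_add, Prod.smul_fst, Prod.smul_snd,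
    smul_eq_mul] at *
  linear_combination mul_le_mul_of_nonneg_left hP ha + mul_le_mul_of_nonneg_left hQ hb - d * hab

theorem affine_le_of_mem_convexHull (hs : ∀ P ∈ s, c * P.1 + d ≤ P.2) {P : ℝ × ℝ}
    (hP : P ∈ convexHull ℝ s) : c * P.1 + d ≤ P.2 :=
  convexHull_min hs (convex_setOf_affine_le c d) hP

theorem exists_fst_le_of_affine_mem_convexHull (hs : ∀ P ∈ s, c * P.1 + d ≤ P.2) {a : ℝ}
    (ha : (a, c * a + d) ∈ convexHull ℝ s) : ∃ P ∈ s, P.1 ≤ a ∧ c * P.1 + d = P.2 := by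
  obtain ⟨ι, _, w, z, hw₀, hw₁, hz, hwz⟩ := mem_convexHull_iff_exists_fintype.1 ha
  have hfst : ∑ i, w i * (z i).1 = a := by
    simpa [Prod.fst_sum] using congrArg Prod.fst hwz
  have hsnd : ∑ i, w i * (z i).2 = c * a + d := by
    simpa [Prod.snd_sum] using congrArg Prod.snd hwz
  -- the weighted excesses of the `z i` over the line sum to zero, so each one vanishes
  have hexcess : ∀ i, w i * ((z i).2 - (c * (z i).1 + d)) = 0 := by
    have hsum : ∑ i, w i * ((z i).2 - (c * (z i).1 + d)) = 0 := by
      simp only [mul_sub, mul_add, sum_sub_distrib, sum_add_distrib, mul_left_comm _ c,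
        ← mul_sum, ← sum_mul, hfst, hsnd, hw₁]
      ring
    intro i
    exact (sum_eq_zero_iff_of_nonneg fun i _ =>
      mul_nonneg (hw₀ i) (sub_nonneg.2 (hs _ (hz i)))).1 hsum i (mem_univ i)
  by_contra! hcon
  have hright : ∀ i, w i ≠ 0 → a < (z i).1 := fun i hi => by
    have hon := (mul_eq_zero.1 (hexcess i)).resolve_left hi
    by_contra! hle
    exact hcon _ (hz i) hle (by linarith)
  have hmoment : ∀ i, w i * ((z i).1 - a) = 0 := by
    have hsum : ∑ i, w i * ((z i).1 - a) = 0 := by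
      simp only [mul_sub, sum_sub_distrib, ← sum_mul, hfst, hw₁, one_mul, sub_self]
    refine fun i => (sum_eq_zero_iff_of_nonneg fun i _ => ?_).1 hsum i (mem_univ i)
    by_cases hi : w i = 0
    · simp [hi]
    · exact mul_nonneg (hw₀ i) (sub_nonneg.2 (hright i hi).le)
  have hw : ∀ i, w i = 0 := fun i => by
    by_contra hi
    exact mul_ne_zero hi (sub_pos.2 (hright i hi)).ne' (hmoment i)
  simp [hw] at hw₁

theorem Convex.mul_sub_le_of_mem_lowerBounds {T : Set (ℝ × ℝ)} (hT : Convex ℝ T)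
    {u v w A B C : ℝ} (hA : (u, A) ∈ T) (hC : (w, C) ∈ T)
    (hB : B ∈ lowerBounds {y | (v, y) ∈ T}) (huv : u < v) (hvw : v < w) :
    B * (w - u) ≤ (w - v) * A + (v - u) * C := by
  have hwu : 0 < w - u := by linarith
  have hmem := hT hA hC (div_nonneg (sub_nonneg.2 hvw.le) hwu.le)
    (div_nonneg (sub_nonneg.2 huv.le) hwu.le) (by field_simp; ring)
  have hcomb : ((w - v) / (w - u)) • (u, A) + ((v - u) / (w - u)) • (w, C)
      = (v, ((w - v) * A + (v - u) * C) / (w - u)) := by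
    simp only [Prod.smul_mk, smul_eq_mul, Prod.mk_add_mk, Prod.mk.injEq]
    constructor
    · field_simp
      ring
    · field_simp
  rw [hcomb] at hmem
  rw [← le_div_iff₀ hwu]
  exact hB hmem

end PlaneConvexHull

def IsLowerHull (K : ℕ) (g h hbar : ℕ → ℝ) : Prop :=
  ∀ i ≤ K, IsLeast
    {y : ℝ | ((g i, y) : ℝ × ℝ) ∈
      convexHull ℝ {P : ℝ × ℝ | ∃ j ≤ K, P = (g j, h j)}}
    (hbar i)

namespace IsLowerHull

variable {K n j : ℕ} {x g h hbar : ℕ → ℝ} {c d : ℝ}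

theorem le (H : IsLowerHull K g h hbar) (hj : j ≤ K) : hbar j ≤ h j :=
  (H j hj).2 (subset_convexHull ℝ _ ⟨j, hj, rfl⟩)

theorem affine_le (H : IsLowerHull K g h hbar) (hline : ∀ l ≤ K, c * g l + d ≤ h l)
    (hj : j ≤ K) : c * g j + d ≤ hbar j :=
  affine_le_of_mem_convexHull (by rintro _ ⟨l, hl, rfl⟩; exact hline l hl) (H j hj).1

theorem eq_of_affine_eq (H : IsLowerHull K g h hbar) (hline : ∀ l ≤ K, c * g l + d ≤ h l)
    (hj : j ≤ K) (htouch : c * g j + d = h j) : hbar j = h j :=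
  le_antisymm (H.le hj) (htouch ▸ H.affine_le hline hj)

theorem affine_le_of_eq_of_eq_succ (H : IsLowerHull K g h hbar)
    (hg : StrictMonoOn g (Set.Iic K)) (hn : n < K) (h₀ : c * g n + d = hbar n)
    (h₁ : c * g (n + 1) + d = hbar (n + 1)) (hj : j ≤ K) : c * g j + d ≤ hbar j := by
  have hT := convex_convexHull ℝ {P : ℝ × ℝ | ∃ j ≤ K, P = (g j, h j)}
  have hgn : g n < g (n + 1) := hg (Set.mem_Iic.2 hn.le) (Set.mem_Iic.2 hn) n.lt_succ_self
  rcases lt_trichotomy j n with hjn | rfl | hnj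
  · have hgj : g j < g n := hg (Set.mem_Iic.2 hj) (Set.mem_Iic.2 hn.le) hjn
    have key := hT.mul_sub_le_of_mem_lowerBounds (H j hj).1 (H (n + 1) hn).1 (H n hn.le).2
      hgj hgn
    refine le_of_mul_le_mul_left ?_ (sub_pos.2 hgn)
    linear_combination key + (g (n + 1) - g j) * h₀ - (g n - g j) * h₁
  · exact h₀.le
  · obtain rfl | hnj := (Nat.succ_le_of_lt hnj).eq_or_lt
    · exact h₁.le
    have hgj : g (n + 1) < g j := hg (Set.mem_Iic.2 hn) (Set.mem_Iic.2 hj) hnj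
    have key := hT.mul_sub_le_of_mem_lowerBounds (H n hn.le).1 (H j hj).1 (H (n + 1) hn).2
      hgn hgj
    refine le_of_mul_le_mul_left ?_ (sub_pos.2 hgn)
    linear_combination key + (g j - g n) * h₁ - (g j - g (n + 1)) * h₀

theorem slope_lt (H : IsLowerHull K g h hbar) (hg : StrictMonoOn g (Set.Iic K))
    (hgK : g K = 1) (hh : ∀ j ≤ K, h j = -x (j + 1) * (1 - g j))
    (hx : StrictMonoOn x (Set.Icc 1 K)) (hn : n + 1 < K) :
    (hbar (n + 1) - hbar n) / (g (n + 1) - g n) < x (n + 1) := by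
  set c := (hbar (n + 1) - hbar n) / (g (n + 1) - g n)
  have hgn : g n < g (n + 1) := hg (Set.mem_Iic.2 (by omega)) (Set.mem_Iic.2 hn.le) n.lt_succ_self
  have h₀ : c * g n + (hbar n - c * g n) = hbar n := by ring
  have h₁ : c * g (n + 1) + (hbar n - c * g n) = hbar (n + 1) := by
    have : c * (g (n + 1) - g n) = hbar (n + 1) - hbar n := div_mul_cancel₀ _ (sub_pos.2 hgn).ne'
    linear_combination this
  have hline : ∀ l ≤ K, c * g l + (hbar n - c * g n) ≤ h l := fun l hl =>
    (H.affine_le_of_eq_of_eq_succ hg (by omega) h₀ h₁ hl).trans (H.le hl)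
  obtain ⟨_, ⟨j, hjK, rfl⟩, hgjn, htouch⟩ := exists_fst_le_of_affine_mem_convexHull
    (by rintro _ ⟨l, hl, rfl⟩; exact hline l hl) (h₀.symm ▸ (H n (by omega)).1)
  have hjn : j ≤ n := (hg.le_iff_le (Set.mem_Iic.2 hjK) (Set.mem_Iic.2 (by omega))).1 hgjn
  have hlast := hline (K - 1) (by omega)
  rw [hh (K - 1) (by omega), Nat.sub_add_cancel (by omega)] at hlast
  rw [hh j hjK] at htouch
  have hxj : x (j + 1) ≤ x (n + 1) :=
    hx.monotoneOn ⟨by omega, by omega⟩ ⟨by omega, by omega⟩ (by omega)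
  have hxK : x (j + 1) < x K := hx ⟨by omega, by omega⟩ ⟨by omega, le_rfl⟩ (by omega)
  have hgj : g j ≤ g (K - 1) :=
    hg.monotoneOn (Set.mem_Iic.2 hjK) (Set.mem_Iic.2 (by omega)) (by omega)
  have hgK₁ : g (K - 1) < 1 :=
    hgK ▸ hg (Set.mem_Iic.2 (by omega)) (Set.mem_Iic.2 le_rfl) (by omega)
  have hbelow : c * (g (K - 1) - g j) < x (j + 1) * (g (K - 1) - g j) := by
    nlinarith [mul_pos (sub_pos.2 hxK) (sub_pos.2 hgK₁)]
  exact (lt_of_mul_lt_mul_right hbelow (sub_nonneg.2 hgj)).trans_le hxj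

theorem eq_neg_mul_one_sub_of_pred_le (H : IsLowerHull K g h hbar)
    (hg : StrictMonoOn g (Set.Iic K)) (hgK : g K = 1)
    (hh : ∀ j ≤ K, h j = -x (j + 1) * (1 - g j))
    (hx : MonotoneOn x (Set.Icc 1 K)) (hj : K - 1 ≤ j) (hjK : j ≤ K) :
    hbar j = -x K * (1 - g j) := by
  have hline : ∀ l ≤ K, x K * g l + -x K ≤ h l := by
    intro l hl
    rw [hh l hl]
    obtain hl | rfl := hl.lt_or_eq
    · have hxl : x (l + 1) ≤ x K := hx ⟨by omega, by omega⟩ ⟨by omega, le_rfl⟩ (by omega)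
      have hgl : g l ≤ 1 :=
        hgK ▸ hg.monotoneOn (Set.mem_Iic.2 hl.le) (Set.mem_Iic.2 le_rfl) hl.le
      nlinarith
    · simp [hgK]
  have hhj : h j = -x K * (1 - g j) := by
    rw [hh j hjK]
    obtain hj₁ | rfl : j + 1 = K ∨ j = K := by omega
    · rw [hj₁]
    · rw [hgK]; ring
  rw [H.eq_of_affine_eq hline hjK (by rw [hhj]; ring), hhj]

end IsLowerHull

theorem sum_Icc_add_one_eq_one_sub {K j : ℕ} {p g : ℕ → ℝ}
    (hg : ∀ i ≤ K, g i = ∑ l ∈ Icc 1 i, p l) (hp1 : ∑ l ∈ Icc 1 K, p l = 1)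
    (hj : j ≤ K) :
    ∑ l ∈ Icc (j + 1) K, p l = 1 - g j := by
  have := Finset.sum_Ioc_consecutive p (Nat.zero_le j) hj
  simp only [← Finset.Icc_add_one_left_eq_Ioc, zero_add, ← hg j hj, hp1] at this
  linarith

theorem strictMonoOn_of_eq_sum_Icc {K : ℕ} {p g : ℕ → ℝ}
    (hp : ∀ i, 1 ≤ i → i ≤ K → 0 < p i)
    (hg : ∀ i ≤ K, g i = ∑ l ∈ Icc 1 i, p l) : StrictMonoOn g (Set.Iic K) :=
  strictMonoOn_of_lt_add_one Set.ordConnected_Iic fun i _ _ hi₁ => by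
    rw [hg i (Nat.le_of_succ_le hi₁), hg (i + 1) hi₁, sum_Icc_succ_top (by omega)]
    exact lt_add_of_pos_right _ (hp (i + 1) (by omega) hi₁)

theorem stmt_11_general (K : ℕ) (hK : 1 ≤ K) (x p : ℕ → ℝ)
    (hxlt : ∀ i, 1 ≤ i → i < K → x i < x (i + 1))
    (hp : ∀ i, 1 ≤ i → i ≤ K → 0 < p i)
    (hp1 : ∑ i ∈ Finset.Icc 1 K, p i = 1)
    (g h hbar wbar : ℕ → ℝ)
    (hg : ∀ i ≤ K, g i = ∑ j ∈ Finset.Icc 1 i, p j)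
    (hh : ∀ i ≤ K, h i = -x (i + 1) * ∑ j ∈ Finset.Icc (i + 1) K, p j)
    (hbar_min : ∀ i ≤ K, IsLeast {y : ℝ |
        ((g i, y) : ℝ × ℝ) ∈ convexHull ℝ {P : ℝ × ℝ | ∃ j ≤ K, P = (g j, h j)}}
      (hbar i))
    (hwbar : ∀ i, 1 ≤ i → i ≤ K →
      wbar i = (hbar i - hbar (i - 1)) / (g i - g (i - 1))) :
    (∀ i, 1 ≤ i → i ≤ K - 1 → wbar i < x i) ∧ wbar K = x K := by
  have H : IsLowerHull K g h hbar := hbar_min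
  have hg_mono := strictMonoOn_of_eq_sum_Icc hp hg
  have hgK : g K = 1 := (hg K le_rfl).trans hp1
  have hh' : ∀ j ≤ K, h j = -x (j + 1) * (1 - g j) := fun j hj => by
    rw [hh j hj, sum_Icc_add_one_eq_one_sub hg hp1 hj]
  have hx_mono : StrictMonoOn x (Set.Icc 1 K) :=
    strictMonoOn_of_lt_add_one Set.ordConnected_Icc fun i _ hi hi₁ => hxlt i hi.1 hi₁.2
  refine ⟨fun i hi hiK => ?_, ?_⟩
  · obtain ⟨n, rfl⟩ := Nat.exists_eq_add_of_le' hi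
    rw [hwbar _ hi (by omega), Nat.add_sub_cancel]
    exact H.slope_lt hg_mono hgK hh' hx_mono (by omega)
  · have hgK₁ : g (K - 1) < 1 :=
      hgK ▸ hg_mono (Set.mem_Iic.2 (by omega)) (Set.mem_Iic.2 le_rfl) (by omega)
    have hhull : ∀ j, K - 1 ≤ j → j ≤ K → hbar j = -x K * (1 - g j) := fun _ =>
      H.eq_neg_mul_one_sub_of_pred_le hg_mono hgK hh' hx_mono.monotoneOn
    rw [hwbar K hK le_rfl, hhull K (Nat.sub_le K 1) le_rfl, hhull (K - 1) le_rfl (Nat.sub_le K 1),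
      hgK]
    field_simp [(sub_pos.2 hgK₁).ne']
    ring

/-- w̄^i < x^i for all 1 ≤ i ≤ K−1, and w̄^K = x^K. -/
theorem stmt_11 (K : ℕ) (hK : 1 ≤ K) (x p : ℕ → ℝ)
    (hx0 : 0 ≤ x 1)
    (hxlt : ∀ i, 1 ≤ i → i < K → x i < x (i + 1))
    (hp : ∀ i, 1 ≤ i → i ≤ K → 0 < p i)
    (hp1 : ∑ i ∈ Finset.Icc 1 K, p i = 1)
    (g h hbar wbar : ℕ → ℝ)
    (hg : ∀ i ≤ K, g i = ∑ j ∈ Finset.Icc 1 i, p j)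
    (hh : ∀ i ≤ K, h i = -x (i + 1) * ∑ j ∈ Finset.Icc (i + 1) K, p j)
    (hbar_min : ∀ i ≤ K, IsLeast {y : ℝ |
        ((g i, y) : ℝ × ℝ) ∈ convexHull ℝ {P : ℝ × ℝ | ∃ j ≤ K, P = (g j, h j)}}
      (hbar i))
    (hwbar : ∀ i, 1 ≤ i → i ≤ K →
      wbar i = (hbar i - hbar (i - 1)) / (g i - g (i - 1))) :
    (∀ i, 1 ≤ i → i ≤ K - 1 → wbar i < x i) ∧ wbar K = x K :=
  stmt_11_general K hK x p hxlt hp hp1 g h hbar wbar hg hh hbar_min hwbar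
end

section
/- Fix 1 ≤ i ≤ K−1 and define, for every real c < x^i, Ψ_i(c) = (max_{1≤k≤K} (x^k − c)·(Σ_{j=k}^K p^j)) / (x^i − c). Then w̄^i < x^i, Ψ_i(w̄^i) ≤ Ψ_i(c) for every c < x^i, and every c < x^i with Ψ_i(c) = Ψ_i(w̄^i) satisfies c ≤ w̄^i; that is, w̄^i is the largest minimizer of Ψ_i on (−∞, x^i). -/
/-!
Over `[g (i - 1), g i]` the lower convex hull of the points `(g k, h k)` follows a supporting line
`y = s * g + d` that touches two of the points, `(g a, h a)` and `(g b, h b)` with `a < i ≤ b`, so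
its slope `s` is `w̄ⁱ`. Since `h k = -x (k + 1) * (g K - g k)`, a point lies above this line
exactly when `(x (k + 1) - s) * (g K - g k) ≤ -(s * g K + d)`. So at `c = w̄ⁱ` the maximum that
defines `Ψ` is attained both at `k = a + 1`, where `x (a + 1) ≤ xⁱ`, and at `k = b + 1`, where
`xⁱ < x (b + 1)`. Here `b ≠ K`, because a supporting line through `(g K, h K) = (g K, 0)` would
force `x (i + 1) ≤ x (a + 1)`. As `c` decreases below `w̄ⁱ`, the quotient
`(x (a + 1) - c) * (g K - g a) / (xⁱ - c)` does not decrease; as `c` increases above `w̄ⁱ`, the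
quotient `(x (b + 1) - c) * (g K - g b) / (xⁱ - c)` strictly increases.
-/

open Finset

section LowerHull

variable {S : Set (ℝ × ℝ)} {s d : ℝ}

theorem convexHull_subset_setOf_le (hS : ∀ P ∈ S, s * P.1 + d ≤ P.2) :
    convexHull ℝ S ⊆ {P : ℝ × ℝ | s * P.1 + d ≤ P.2} := by
  refine convexHull_min hS ?_
  convert convex_halfSpace_ge (LinearMap.snd ℝ ℝ ℝ - s • LinearMap.fst ℝ ℝ ℝ).isLinear d using 1
  ext P
  simp only [Set.mem_ofPred_eq, LinearMap.sub_apply, LinearMap.smul_apply, LinearMap.snd_apply,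
    LinearMap.fst_apply, smul_eq_mul]
  constructor <;> intro <;> linarith

theorem mk_mem_convexHull_of_mem_line {u v : ℝ × ℝ} {t : ℝ} (hu : u ∈ S) (hv : v ∈ S)
    (hu' : u.2 = s * u.1 + d) (hv' : v.2 = s * v.1 + d) (htu : u.1 ≤ t) (htv : t ≤ v.1) :
    (t, s * t + d) ∈ convexHull ℝ S := by
  refine segment_subset_convexHull hu hv ?_
  rcases htu.eq_or_lt with rfl | hlt
  · rw [← hu']
    exact left_mem_segment ℝ u v
  · have hpos : 0 < v.1 - u.1 := by linarith
    refine ⟨(v.1 - t) / (v.1 - u.1), (t - u.1) / (v.1 - u.1), by positivity, by positivity,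
      by field_simp; ring, ?_⟩
    ext <;> simp only [Prod.fst_add, Prod.snd_add, Prod.smul_fst, Prod.smul_snd, smul_eq_mul,
      hu', hv'] <;> field_simp <;> ring

theorem isLeast_convexHull_of_supporting_line {u v : ℝ × ℝ} {t : ℝ}
    (hS : ∀ P ∈ S, s * P.1 + d ≤ P.2) (hu : u ∈ S) (hv : v ∈ S)
    (hu' : u.2 = s * u.1 + d) (hv' : v.2 = s * v.1 + d) (htu : u.1 ≤ t) (htv : t ≤ v.1) :
    IsLeast {y | (t, y) ∈ convexHull ℝ S} (s * t + d) :=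
  ⟨mk_mem_convexHull_of_mem_line hu hv hu' hv' htu htv,
    fun _ hy => convexHull_subset_setOf_le hS hy⟩

theorem interp_lt_of_le_of_lt {u₁ u₂ v₁ v₂ t : ℝ} (htu : u₁ < t) (htv : t < v₁)
    (hu : u₂ ≤ s * u₁ + d) (hv : v₂ ≤ s * v₁ + d) (hlt : u₂ < s * u₁ + d ∨ v₂ < s * v₁ + d) :
    ((v₁ - t) * u₂ + (t - u₁) * v₂) / (v₁ - u₁) < s * t + d := by
  rw [div_lt_iff₀ (by linarith)]
  rcases hlt with hlt | hlt
  · nlinarith [mul_lt_mul_of_pos_left hlt (sub_pos.2 htv),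
      mul_le_mul_of_nonneg_left hv (sub_pos.2 htu).le]
  · nlinarith [mul_lt_mul_of_pos_left hlt (sub_pos.2 htu),
      mul_le_mul_of_nonneg_left hu (sub_pos.2 htv).le]

variable {K i : ℕ} {g : ℕ → ℝ}

theorem exists_supporting_line (h : ℕ → ℝ) (hg : StrictMonoOn g (Set.Iic K)) (hi : 0 < i)
    (hiK : i ≤ K) :
    ∃ a b : ℕ, ∃ s d : ℝ, a < i ∧ i ≤ b ∧ b ≤ K ∧ h a = s * g a + d ∧ h b = s * g b + d ∧
      ∀ k ≤ K, s * g k + d ≤ h k := by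
  obtain ⟨t, hti₁, hti⟩ := exists_between
    (hg (Set.mem_Iic.2 (by omega)) (Set.mem_Iic.2 hiK) (by omega) : g (i - 1) < g i)
  have hlt_t : ∀ k < i, g k < t := fun k hk =>
    (hg.monotoneOn (Set.mem_Iic.2 (by omega)) (Set.mem_Iic.2 (by omega))
      (by omega : k ≤ i - 1)).trans_lt hti₁
  have ht_lt : ∀ k, i ≤ k → k ≤ K → t < g k := fun k hk hkK =>
    hti.trans_le (hg.monotoneOn (Set.mem_Iic.2 hiK) (Set.mem_Iic.2 hkK) hk)
  -- The chord across `t` that is lowest at `t` lies below all the points: a point strictly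
  -- below it would give, with one of its endpoints, a chord across `t` that is lower still.
  obtain ⟨⟨a, b⟩, hab, hmin⟩ := exists_min_image (range i ×ˢ Icc i K)
    (fun q => ((g q.2 - t) * h q.1 + (t - g q.1) * h q.2) / (g q.2 - g q.1))
    ⟨(i - 1, i), by simp; omega⟩
  simp only [mem_product, mem_range, mem_Icc] at hab hmin
  obtain ⟨hai, hib, hbK⟩ := hab
  have hgab : g b - g a ≠ 0 := (sub_pos.2 ((hlt_t a hai).trans (ht_lt b hib hbK))).ne'
  set s := (h b - h a) / (g b - g a)
  set d := h a - s * g a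
  have ha : h a = s * g a + d := by ring
  have hb : h b = s * g b + d := by simp only [s, d]; field_simp; ring
  have hval : ((g b - t) * h a + (t - g a) * h b) / (g b - g a) = s * t + d := by
    simp only [s, d]; field_simp; ring
  refine ⟨a, b, s, d, hai, hib, hbK, ha, hb, fun k hk => not_lt.1 fun hk' => ?_⟩
  rcases lt_or_ge k i with hki | hki
  · have := interp_lt_of_le_of_lt (hlt_t k hki) (ht_lt b hib hbK) hk'.le hb.le (Or.inl hk')
    linarith [hmin (k, b) ⟨hki, hib, hbK⟩]
  · have := interp_lt_of_le_of_lt (hlt_t a hai) (ht_lt k hki hk) ha.le hk'.le (Or.inr hk')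
    linarith [hmin (a, k) ⟨hai, hki, hk⟩]

theorem slope_lowerHull_eq_of_supporting_line {h hbar : ℕ → ℝ} {a b : ℕ}
    (hg : StrictMonoOn g (Set.Iic K))
    (hbar_min : ∀ i ≤ K, IsLeast {y : ℝ |
        ((g i, y) : ℝ × ℝ) ∈ convexHull ℝ {P : ℝ × ℝ | ∃ j ≤ K, P = (g j, h j)}} (hbar i))
    (hai : a < i) (hib : i ≤ b) (hbK : b ≤ K) (ha : h a = s * g a + d) (hb : h b = s * g b + d)
    (hsupp : ∀ k ≤ K, s * g k + d ≤ h k) :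
    (hbar i - hbar (i - 1)) / (g i - g (i - 1)) = s := by
  have hbar_eq : ∀ m, a ≤ m → m ≤ b → hbar m = s * g m + d := fun m ham hmb =>
    (hbar_min m (hmb.trans hbK)).unique <| isLeast_convexHull_of_supporting_line
      (by rintro _ ⟨j, hj, rfl⟩; exact hsupp j hj) ⟨a, by omega, rfl⟩ ⟨b, hbK, rfl⟩ ha hb
      (hg.monotoneOn (Set.mem_Iic.2 (by omega)) (Set.mem_Iic.2 (by omega)) ham)
      (hg.monotoneOn (Set.mem_Iic.2 (by omega)) (Set.mem_Iic.2 hbK) hmb)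
  have hgi : g (i - 1) < g i := hg (Set.mem_Iic.2 (by omega)) (Set.mem_Iic.2 (by omega)) (by omega)
  rw [hbar_eq i (by omega) hib, hbar_eq (i - 1) (by omega) (by omega)]
  field_simp [(sub_pos.2 hgi).ne']
  ring

end LowerHull

section Ratio

variable {α β z s c : ℝ}

theorem sub_mul_div_sub_le_of_le (hα : α ≤ z) (hβ : 0 ≤ β) (hcs : c ≤ s) (hs : s < z) :
    (α - s) * β / (z - s) ≤ (α - c) * β / (z - c) := by
  rw [div_le_div_iff₀ (by linarith) (by linarith)]
  nlinarith [mul_nonneg (mul_nonneg hβ (sub_nonneg.2 hα)) (sub_nonneg.2 hcs)]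

theorem sub_mul_div_sub_lt_of_lt (hα : z < α) (hβ : 0 < β) (hsc : s < c) (hc : c < z) :
    (α - s) * β / (z - s) < (α - c) * β / (z - c) := by
  rw [div_lt_div_iff₀ (by linarith) (by linarith)]
  nlinarith [mul_pos (mul_pos hβ (sub_pos.2 hα)) (sub_pos.2 hsc)]

theorem lt_of_sub_mul_eq_sub_mul {α₁ α₂ β₁ β₂ : ℝ} (hα₁ : α₁ ≤ z) (hα₂ : z < α₂) (hβ₂ : 0 < β₂)
    (hβ : β₂ ≤ β₁) (h : (α₁ - s) * β₁ = (α₂ - s) * β₂) : s < z := by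
  by_contra! hz
  nlinarith [mul_le_mul_of_nonneg_left hβ (sub_nonneg.2 hz), mul_lt_mul_of_pos_right hα₂ hβ₂,
    mul_le_mul_of_nonneg_right hα₁ (hβ₂.le.trans hβ)]

variable {F : ℝ → ℝ} {α₁ α₂ β₁ β₂ : ℝ}

theorem div_sub_lt_of_lt (hα₂ : z < α₂) (hβ₂ : 0 < β₂) (hF₂ : ∀ c, (α₂ - c) * β₂ ≤ F c)
    (hs₂ : F s = (α₂ - s) * β₂) (hsc : s < c) (hc : c < z) :
    F s / (z - s) < F c / (z - c) :=
  calc F s / (z - s) = (α₂ - s) * β₂ / (z - s) := by rw [hs₂]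
    _ < (α₂ - c) * β₂ / (z - c) := sub_mul_div_sub_lt_of_lt hα₂ hβ₂ hsc hc
    _ ≤ F c / (z - c) := div_le_div_of_nonneg_right (hF₂ c) (sub_pos.2 hc).le

theorem isGreatest_argmin_div_sub_of_two_active (hα₁ : α₁ ≤ z) (hα₂ : z < α₂) (hβ₂ : 0 < β₂)
    (hβ : β₂ ≤ β₁) (hF₁ : ∀ c, (α₁ - c) * β₁ ≤ F c) (hF₂ : ∀ c, (α₂ - c) * β₂ ≤ F c)
    (hs₁ : F s = (α₁ - s) * β₁) (hs₂ : F s = (α₂ - s) * β₂) :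
    s < z ∧ (∀ c < z, F s / (z - s) ≤ F c / (z - c)) ∧
      (∀ c < z, F c / (z - c) = F s / (z - s) → c ≤ s) := by
  have hs : s < z := lt_of_sub_mul_eq_sub_mul hα₁ hα₂ hβ₂ hβ (hs₁.symm.trans hs₂)
  refine ⟨hs, fun c hc => ?_, fun c hc heq => not_lt.1 fun hsc =>
    (div_sub_lt_of_lt hα₂ hβ₂ hF₂ hs₂ hsc hc).ne' heq⟩
  rcases le_or_gt c s with hcs | hsc
  · calc F s / (z - s) = (α₁ - s) * β₁ / (z - s) := by rw [hs₁]
      _ ≤ (α₁ - c) * β₁ / (z - c) := sub_mul_div_sub_le_of_le hα₁ (hβ₂.le.trans hβ) hcs hs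
      _ ≤ F c / (z - c) := div_le_div_of_nonneg_right (hF₁ c) (sub_pos.2 hc).le
  · exact (div_sub_lt_of_lt hα₂ hβ₂ hF₂ hs₂ hsc hc).le

end Ratio

section PartialSums

variable {K : ℕ} {x p g h : ℕ → ℝ} {s d : ℝ}

theorem sum_Icc_add_one_eq_sub (hg : ∀ i ≤ K, g i = ∑ j ∈ Icc 1 i, p j) {k : ℕ} (hk : k ≤ K) :
    ∑ j ∈ Icc (k + 1) K, p j = g K - g k := by
  have hIcc (n : ℕ) : Icc 1 n = Ioc 0 n := Icc_add_one_left_eq_Ioc 0 n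
  rw [hg K le_rfl, hg k hk, hIcc, hIcc, Icc_add_one_left_eq_Ioc,
    ← sum_Ioc_consecutive p k.zero_le hk, add_sub_cancel_left]

theorem strictMonoOn_of_sum_Icc (hg : ∀ i ≤ K, g i = ∑ j ∈ Icc 1 i, p j)
    (hp : ∀ i, 1 ≤ i → i ≤ K → 0 < p i) : StrictMonoOn g (Set.Iic K) :=
  strictMonoOn_of_lt_add_one Set.ordConnected_Iic fun k _ hk hk' => by
    rw [hg k hk, hg (k + 1) hk', sum_Icc_succ_top (by omega)]
    linarith [hp (k + 1) (by omega) hk']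

theorem sub_mul_sub_eq (hg : ∀ i ≤ K, g i = ∑ j ∈ Icc 1 i, p j)
    (hh : ∀ i ≤ K, h i = -x (i + 1) * ∑ j ∈ Icc (i + 1) K, p j) {k : ℕ} (hk : k ≤ K)
    (c d : ℝ) :
    (x (k + 1) - c) * (g K - g k) = -(c * g K + d) - (h k - (c * g k + d)) := by
  rw [hh k hk, sum_Icc_add_one_eq_sub hg hk]
  ring

theorem sub_mul_sub_le_sup' (hK : 1 ≤ K) (hg : ∀ i ≤ K, g i = ∑ j ∈ Icc 1 i, p j) {k : ℕ}
    (hk : k < K) (c : ℝ) :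
    (x (k + 1) - c) * (g K - g k) ≤
      (Icc 1 K).sup' (nonempty_Icc.mpr hK) (fun k => (x k - c) * ∑ j ∈ Icc k K, p j) := by
  rw [← sum_Icc_add_one_eq_sub hg hk.le]
  exact le_sup' (fun k => (x k - c) * ∑ j ∈ Icc k K, p j) (mem_Icc.2 ⟨by omega, hk⟩)

theorem sup'_eq_of_supporting_line (hK : 1 ≤ K) (hg : ∀ i ≤ K, g i = ∑ j ∈ Icc 1 i, p j)
    (hh : ∀ i ≤ K, h i = -x (i + 1) * ∑ j ∈ Icc (i + 1) K, p j)
    (hsupp : ∀ k ≤ K, s * g k + d ≤ h k) {a : ℕ} (haK : a < K) (ha : h a = s * g a + d) :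
    (Icc 1 K).sup' (nonempty_Icc.mpr hK) (fun k => (x k - s) * ∑ j ∈ Icc k K, p j) =
      (x (a + 1) - s) * (g K - g a) := by
  refine le_antisymm (sup'_le _ _ fun k hk => ?_) (sub_mul_sub_le_sup' hK hg haK s)
  obtain ⟨j, rfl⟩ : ∃ j, k = j + 1 := ⟨k - 1, by grind⟩
  rw [sum_Icc_add_one_eq_sub hg (by grind), sub_mul_sub_eq hg hh (by grind) s d,
    sub_mul_sub_eq hg hh haK.le s d, ha]
  linarith [hsupp j (by grind)]

theorem lt_of_supporting_line (hg : ∀ i ≤ K, g i = ∑ j ∈ Icc 1 i, p j)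
    (hh : ∀ i ≤ K, h i = -x (i + 1) * ∑ j ∈ Icc (i + 1) K, p j)
    (hgK : StrictMonoOn g (Set.Iic K)) {a b i : ℕ} (hai : a < i) (hiK : i < K) (hbK : b ≤ K)
    (hx : x (a + 1) < x (i + 1)) (ha : h a = s * g a + d) (hb : h b = s * g b + d)
    (hsupp : ∀ k ≤ K, s * g k + d ≤ h k) : b < K := by
  refine hbK.lt_of_ne fun hbK' => ?_
  subst hbK'
  have hm : -(s * g b + d) = 0 := by
    simpa [hb] using (sub_mul_sub_eq hg hh le_rfl s d).symm
  have hga : 0 < g b - g a := sub_pos.2 (hgK (Set.mem_Iic.2 (by omega)) Set.self_mem_Iic (by omega))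
  have hgi : 0 < g b - g i := sub_pos.2 (hgK (Set.mem_Iic.2 (by omega)) Set.self_mem_Iic hiK)
  have hRa : (x (a + 1) - s) * (g b - g a) = 0 := by
    rw [sub_mul_sub_eq hg hh (by omega) s d, hm, ha]
    ring
  have hRi : (x (i + 1) - s) * (g b - g i) ≤ 0 := by
    rw [sub_mul_sub_eq hg hh hiK.le s d, hm]
    linarith [hsupp i hiK.le]
  have hs : x (a + 1) = s := by simpa [sub_eq_zero, hga.ne'] using hRa
  nlinarith

end PartialSums

theorem stmt_12_general (K : ℕ) (hK : 1 ≤ K) (x p : ℕ → ℝ)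
    (hxlt : ∀ i, 1 ≤ i → i < K → x i < x (i + 1))
    (hp : ∀ i, 1 ≤ i → i ≤ K → 0 < p i)
    (g h hbar wbar : ℕ → ℝ)
    (hg : ∀ i ≤ K, g i = ∑ j ∈ Finset.Icc 1 i, p j)
    (hh : ∀ i ≤ K, h i = -x (i + 1) * ∑ j ∈ Finset.Icc (i + 1) K, p j)
    (hbar_min : ∀ i ≤ K, IsLeast {y : ℝ |
        ((g i, y) : ℝ × ℝ) ∈ convexHull ℝ {P : ℝ × ℝ | ∃ j ≤ K, P = (g j, h j)}}
      (hbar i))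
    (hwbar : ∀ i, 1 ≤ i → i ≤ K →
      wbar i = (hbar i - hbar (i - 1)) / (g i - g (i - 1)))
    (i : ℕ) (hi1 : 1 ≤ i) (hi2 : i ≤ K - 1)
    (Ψ : ℝ → ℝ)
    (hΨ : ∀ c, Ψ c = ((Finset.Icc 1 K).sup' (Finset.nonempty_Icc.mpr hK)
      (fun k => (x k - c) * ∑ j ∈ Finset.Icc k K, p j)) / (x i - c)) :
    wbar i < x i ∧
    (∀ c, c < x i → Ψ (wbar i) ≤ Ψ c) ∧
    (∀ c, c < x i → Ψ c = Ψ (wbar i) → c ≤ wbar i) := by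
  have hiK : i < K := by omega
  have hgK := strictMonoOn_of_sum_Icc hg hp
  have hxK : StrictMonoOn x (Set.Icc 1 K) :=
    strictMonoOn_of_lt_add_one Set.ordConnected_Icc fun k _ hk hk' => hxlt k hk.1 hk'.2
  obtain ⟨a, b, s, d, hai, hib, hbK, ha, hb, hsupp⟩ := exists_supporting_line h hgK hi1 hiK.le
  have hws : wbar i = s := by
    rw [hwbar i hi1 hiK.le,
      slope_lowerHull_eq_of_supporting_line hgK hbar_min hai hib hbK ha hb hsupp]
  have hbK' : b < K := lt_of_supporting_line hg hh hgK hai hiK hbK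
    (hxK ⟨by omega, by omega⟩ ⟨by omega, by omega⟩ (by omega)) ha hb hsupp
  have hxa : x (a + 1) ≤ x i := hxK.monotoneOn ⟨by omega, by omega⟩ ⟨hi1, hiK.le⟩ (by omega)
  have hxb : x i < x (b + 1) := hxK ⟨hi1, hiK.le⟩ ⟨by omega, by omega⟩ (by omega)
  have hgb : 0 < g K - g b := sub_pos.2 (hgK (Set.mem_Iic.2 hbK) Set.self_mem_Iic hbK')
  have hgab : g K - g b ≤ g K - g a :=
    sub_le_sub_left (hgK.monotoneOn (Set.mem_Iic.2 (by omega)) (Set.mem_Iic.2 hbK) (by omega)) _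
  simpa only [hΨ, hws] using isGreatest_argmin_div_sub_of_two_active hxa hxb hgb hgab
    (sub_mul_sub_le_sup' hK hg (hai.trans hiK)) (sub_mul_sub_le_sup' hK hg hbK')
    (sup'_eq_of_supporting_line hK hg hh hsupp (hai.trans hiK) ha)
    (sup'_eq_of_supporting_line hK hg hh hsupp hbK' hb)

/-- For fixed 1 ≤ i ≤ K−1 and
Ψ_i(c) = (max_{1≤k≤K} (x^k − c)·Σ_{j=k}^K p^j)/(x^i − c), the MVV w̄^i is the
largest minimizer of Ψ_i on (−∞, x^i). -/
theorem stmt_12 (K : ℕ) (hK : 1 ≤ K) (x p : ℕ → ℝ)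
    (hx0 : 0 ≤ x 1)
    (hxlt : ∀ i, 1 ≤ i → i < K → x i < x (i + 1))
    (hp : ∀ i, 1 ≤ i → i ≤ K → 0 < p i)
    (hp1 : ∑ i ∈ Finset.Icc 1 K, p i = 1)
    (g h hbar wbar : ℕ → ℝ)
    (hg : ∀ i ≤ K, g i = ∑ j ∈ Finset.Icc 1 i, p j)
    (hh : ∀ i ≤ K, h i = -x (i + 1) * ∑ j ∈ Finset.Icc (i + 1) K, p j)
    (hbar_min : ∀ i ≤ K, IsLeast {y : ℝ |
        ((g i, y) : ℝ × ℝ) ∈ convexHull ℝ {P : ℝ × ℝ | ∃ j ≤ K, P = (g j, h j)}}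
      (hbar i))
    (hwbar : ∀ i, 1 ≤ i → i ≤ K →
      wbar i = (hbar i - hbar (i - 1)) / (g i - g (i - 1)))
    (i : ℕ) (hi1 : 1 ≤ i) (hi2 : i ≤ K - 1)
    (Ψ : ℝ → ℝ)
    (hΨ : ∀ c, Ψ c = ((Finset.Icc 1 K).sup' (Finset.nonempty_Icc.mpr hK)
      (fun k => (x k - c) * ∑ j ∈ Finset.Icc k K, p j)) / (x i - c)) :
    wbar i < x i ∧
    (∀ c, c < x i → Ψ (wbar i) ≤ Ψ c) ∧
    (∀ c, c < x i → Ψ c = Ψ (wbar i) → c ≤ wbar i) :=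
  stmt_12_general K hK x p hxlt hp g h hbar wbar hg hh hbar_min hwbar i hi1 hi2 Ψ hΨ
end

section
/- Suppose the hazard rate order holds: for all 1 ≤ j ≤ i ≤ K, (Σ_{l=i}^K p_s^l)·(Σ_{l=j}^K p_t^l) ≤ (Σ_{l=i}^K p_t^l)·(Σ_{l=j}^K p_s^l). Then the monotone virtual valuations satisfy w̄_s^i ≥ w̄_t^i for all 1 ≤ i ≤ K. -/
/-!
The envelope `h̄` is the lower boundary of the convex hull of the points `(g^j, h^j)`. The line
through two consecutive envelope points supports the hull, so it touches the generating points on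
both sides of the segment: for `p_s` at some index `b ≥ i`, for `p_t` at some `a ≤ i - 1`. Hence
`w̄_t^i` is at most the slope of the `t`-chord from `a` to `b`, and `w̄_s^i` at least the slope of
the `s`-chord from `a` to `b`. Since `x` is increasing, the hazard rate order says exactly that
the `t`-chord is no steeper than the `s`-chord.
-/

open Finset

theorem exists_mem_eq_le_of_mem_convexHull {E : Type*} [AddCommGroup E] [Module ℝ E]
    {T : Set E} (f φ : E →ₗ[ℝ] ℝ) {r : ℝ} (hT : ∀ P ∈ T, r ≤ f P) {Q : E}
    (hQ : Q ∈ convexHull ℝ T) (hfQ : f Q = r) : ∃ P ∈ T, f P = r ∧ φ P ≤ φ Q := by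
  obtain ⟨ι, _, w, z, hw0, hw1, hzT, hQz⟩ := mem_convexHull_iff_exists_fintype.mp hQ
  have hbalance (ψ : E →ₗ[ℝ] ℝ) : ∑ i, w i * (ψ (z i) - ψ Q) = 0 := by
    simp [mul_sub, sum_sub_distrib, ← sum_mul, hw1, ← hQz, map_sum]
  have hcontact : ∀ i, w i ≠ 0 → f (z i) = r := by
    intro i hi
    have hnonneg : ∀ i ∈ univ, 0 ≤ w i * (f (z i) - f Q) := fun i _ =>
      mul_nonneg (hw0 i) (by rw [hfQ]; linarith [hT _ (hzT i)])
    have := (sum_eq_zero_iff_of_nonneg hnonneg).1 (hbalance f) i (mem_univ i)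
    rw [mul_eq_zero, sub_eq_zero, hfQ] at this
    exact this.resolve_left hi
  by_contra! hfar
  have hpos : ∀ i ∈ univ, 0 ≤ w i * (φ (z i) - φ Q) := by
    intro i _
    rcases (hw0 i).eq_or_lt with h | h
    · simp [← h]
    · exact mul_nonneg h.le (sub_nonneg.2 (hfar _ (hzT i) (hcontact i h.ne')).le)
  have hzero : ∀ i, w i = 0 := by
    intro i
    by_contra hi
    have := (sum_eq_zero_iff_of_nonneg hpos).1 (hbalance φ) i (mem_univ i)
    rw [mul_eq_zero, sub_eq_zero] at this
    exact (hfar _ (hzT i) (hcontact i hi)).ne' (this.resolve_left hi)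
  simp [hzero] at hw1

theorem sum_Icc_sub_sum_Icc (p : ℕ → ℝ) {a b K : ℕ} (hab : a ≤ b) (hbK : b ≤ K) :
    ∑ l ∈ Icc 1 b, p l - ∑ l ∈ Icc 1 a, p l =
      ∑ l ∈ Icc (a + 1) K, p l - ∑ l ∈ Icc (b + 1) K, p l := by
  rw [Icc_add_one_left_eq_Ioc, Icc_add_one_left_eq_Ioc, show Icc 1 b = Ioc 0 b from
    Icc_add_one_left_eq_Ioc 0 b, show Icc 1 a = Ioc 0 a from Icc_add_one_left_eq_Ioc 0 a,
    ← sum_Ioc_consecutive p (Nat.zero_le a) hab, ← sum_Ioc_consecutive p hab hbK]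
  ring

def IsLowerEnvelope (K : ℕ) (G H Hb : ℕ → ℝ) : Prop :=
  ∀ i ≤ K, IsLeast {y : ℝ |
    (G i, y) ∈ convexHull ℝ {P : ℝ × ℝ | ∃ j ≤ K, P = (G j, H j)}} (Hb i)

namespace IsLowerEnvelope

variable {K : ℕ} {G H Hb : ℕ → ℝ}

theorem mul_sub_le_of_mem_convexHull (h : IsLowerEnvelope K G H Hb) {q : ℕ} (hq : q ≤ K)
    {u v : ℝ × ℝ}
    (hu : u ∈ convexHull ℝ {P : ℝ × ℝ | ∃ j ≤ K, P = (G j, H j)})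
    (hv : v ∈ convexHull ℝ {P : ℝ × ℝ | ∃ j ≤ K, P = (G j, H j)})
    (huq : u.1 ≤ G q) (hqv : G q ≤ v.1) (huv : u.1 < v.1) :
    Hb q * (v.1 - u.1) ≤ u.2 * (v.1 - G q) + v.2 * (G q - u.1) := by
  set θ := (G q - u.1) / (v.1 - u.1)
  have hθ0 : 0 ≤ θ := div_nonneg (by linarith) (by linarith)
  have hθ1 : θ ≤ 1 := div_le_one_of_le₀ (by linarith) (by linarith)
  have hθv : θ * (v.1 - u.1) = G q - u.1 := div_mul_cancel₀ _ (by linarith)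
  have hcombo : (1 - θ) • u + θ • v = (G q, (1 - θ) * u.2 + θ * v.2) := by
    ext
    · simp only [Prod.fst_add, Prod.smul_fst, smul_eq_mul]
      linear_combination hθv
    · simp
  have hmem := convex_convexHull ℝ _ hu hv (sub_nonneg.2 hθ1) hθ0 (sub_add_cancel 1 θ)
  rw [hcombo] at hmem
  have hle : Hb q ≤ (1 - θ) * u.2 + θ * v.2 := (h q hq).2 hmem
  calc Hb q * (v.1 - u.1) ≤ ((1 - θ) * u.2 + θ * v.2) * (v.1 - u.1) :=
        mul_le_mul_of_nonneg_right hle (by linarith)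
    _ = u.2 * (v.1 - G q) + v.2 * (G q - u.1) := by linear_combination (v.2 - u.2) * hθv

theorem add_mul_sub_le_of_slope (h : IsLowerEnvelope K G H Hb) (hG : StrictMonoOn G (Set.Iic K))
    {j : ℕ} (hj : j + 1 ≤ K) {c : ℝ} (hc : c = (Hb (j + 1) - Hb j) / (G (j + 1) - G j))
    {m : ℕ} (hm : m ≤ K) : Hb j + c * (G m - G j) ≤ H m := by
  have hlt {p q : ℕ} (hpq : p < q) (hq : q ≤ K) : G p < G q :=
    hG (Set.mem_Iic.2 (by omega)) (Set.mem_Iic.2 hq) hpq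
  have hstep : G j < G (j + 1) := hlt (Nat.lt_succ_self j) hj
  have hΔ : 0 < G (j + 1) - G j := sub_pos.2 hstep
  have hc : c * (G (j + 1) - G j) = Hb (j + 1) - Hb j := by rw [hc, div_mul_cancel₀ _ hΔ.ne']
  refine le_of_mul_le_mul_right ?_ hΔ
  have hPm : (G m, H m) ∈ convexHull ℝ {P : ℝ × ℝ | ∃ j ≤ K, P = (G j, H j)} :=
    subset_convexHull ℝ _ ⟨m, hm, rfl⟩
  rcases le_or_gt m j with hmj | hjm
  · have := h.mul_sub_le_of_mem_convexHull (q := j) (by omega) hPm (h (j + 1) hj).1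
      (hG.monotoneOn (Set.mem_Iic.2 hm) (Set.mem_Iic.2 (by omega)) hmj) hstep.le
      (hlt (Nat.lt_succ_of_le hmj) hj)
    linear_combination (G m - G j) * hc + this
  · have := h.mul_sub_le_of_mem_convexHull (q := j + 1) hj (h j (by omega)).1 hPm hstep.le
      (hG.monotoneOn (Set.mem_Iic.2 hj) (Set.mem_Iic.2 hm) hjm) (hlt hjm hm)
    linear_combination (G m - G j) * hc + this

theorem exists_contact_ge (h : IsLowerEnvelope K G H Hb) (hG : StrictMonoOn G (Set.Iic K))
    {j : ℕ} (hj : j + 1 ≤ K) {c : ℝ} (hc : c = (Hb (j + 1) - Hb j) / (G (j + 1) - G j)) :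
    ∃ b, j + 1 ≤ b ∧ b ≤ K ∧ ∀ m ≤ K, H b - H m ≤ c * (G b - G m) := by
  let f : ℝ × ℝ →ₗ[ℝ] ℝ := LinearMap.snd ℝ ℝ ℝ - c • LinearMap.fst ℝ ℝ ℝ
  have hf (P : ℝ × ℝ) : f P = P.2 - c * P.1 := rfl
  have hslope : c * (G (j + 1) - G j) = Hb (j + 1) - Hb j := by
    rw [hc, div_mul_cancel₀]
    exact (sub_pos.2 (hG (Set.mem_Iic.2 (by omega)) (Set.mem_Iic.2 hj) (by omega))).ne'
  obtain ⟨_, ⟨b, hbK, rfl⟩, hb, hbj⟩ := exists_mem_eq_le_of_mem_convexHull f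
    (-LinearMap.fst ℝ ℝ ℝ) (r := Hb j - c * G j)
    (by rintro _ ⟨m, hm, rfl⟩; rw [hf]; linarith [h.add_mul_sub_le_of_slope hG hj hc hm])
    (h (j + 1) hj).1 (by rw [hf]; linarith)
  rw [hf] at hb
  rw [LinearMap.neg_apply, LinearMap.neg_apply, neg_le_neg_iff] at hbj
  refine ⟨b, (hG.le_iff_le (Set.mem_Iic.2 hj) (Set.mem_Iic.2 hbK)).1 hbj, hbK, fun m hm => ?_⟩
  linarith [h.add_mul_sub_le_of_slope hG hj hc hm]

theorem exists_contact_le (h : IsLowerEnvelope K G H Hb) (hG : StrictMonoOn G (Set.Iic K))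
    {j : ℕ} (hj : j + 1 ≤ K) {c : ℝ} (hc : c = (Hb (j + 1) - Hb j) / (G (j + 1) - G j)) :
    ∃ a ≤ j, ∀ m ≤ K, c * (G m - G a) ≤ H m - H a := by
  let f : ℝ × ℝ →ₗ[ℝ] ℝ := LinearMap.snd ℝ ℝ ℝ - c • LinearMap.fst ℝ ℝ ℝ
  have hf (P : ℝ × ℝ) : f P = P.2 - c * P.1 := rfl
  obtain ⟨_, ⟨a, haK, rfl⟩, ha, haj⟩ := exists_mem_eq_le_of_mem_convexHull f
    (LinearMap.fst ℝ ℝ ℝ) (r := Hb j - c * G j)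
    (by rintro _ ⟨m, hm, rfl⟩; rw [hf]; linarith [h.add_mul_sub_le_of_slope hG hj hc hm])
    (h j (by omega)).1 (hf _)
  rw [hf] at ha
  refine ⟨a, (hG.le_iff_le (Set.mem_Iic.2 haK) (Set.mem_Iic.2 (by omega))).1 haj, fun m hm => ?_⟩
  linarith [h.add_mul_sub_le_of_slope hG hj hc hm]

end IsLowerEnvelope

theorem strictMonoOn_of_partialSum {K : ℕ} {p g : ℕ → ℝ} (hp : ∀ i, 1 ≤ i → i ≤ K → 0 < p i)
    (hg : ∀ i ≤ K, g i = ∑ j ∈ Icc 1 i, p j) : StrictMonoOn g (Set.Iic K) := by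
  refine strictMonoOn_of_lt_add_one Set.ordConnected_Iic fun a _ _ ha => ?_
  rw [Set.mem_Iic] at ha
  rw [hg a (by omega), hg (a + 1) ha, sum_Icc_succ_top (by omega)]
  linarith [hp (a + 1) (by omega) ha]

theorem cross_le_of_hazard {K : ℕ} {x ps pt gs hs gt ht : ℕ → ℝ}
    (hx : MonotoneOn x (Set.Icc 1 K))
    (hgs : ∀ i ≤ K, gs i = ∑ j ∈ Icc 1 i, ps j)
    (hhs : ∀ i ≤ K, hs i = -x (i + 1) * ∑ j ∈ Icc (i + 1) K, ps j)
    (hgt : ∀ i ≤ K, gt i = ∑ j ∈ Icc 1 i, pt j)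
    (hht : ∀ i ≤ K, ht i = -x (i + 1) * ∑ j ∈ Icc (i + 1) K, pt j)
    (hazard : ∀ i j, 1 ≤ j → j ≤ i → i ≤ K →
      (∑ l ∈ Icc i K, ps l) * (∑ l ∈ Icc j K, pt l) ≤
        (∑ l ∈ Icc i K, pt l) * (∑ l ∈ Icc j K, ps l))
    {a b : ℕ} (hab : a < b) (hbK : b ≤ K) :
    (ht b - ht a) * (gs b - gs a) ≤ (hs b - hs a) * (gt b - gt a) := by
  rw [hgs b hbK, hgs a (by omega), sum_Icc_sub_sum_Icc ps hab.le hbK, hgt b hbK, hgt a (by omega),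
    sum_Icc_sub_sum_Icc pt hab.le hbK, hhs b hbK, hhs a (by omega), hht b hbK, hht a (by omega)]
  -- The two sides differ by (x^{b+1} - x^{a+1}) times a hazard-rate determinant; for b = K the
  -- tail sums over `Icc (K + 1) K` vanish, so the unconstrained value `x (K + 1)` is harmless.
  have key : 0 ≤ (x (b + 1) - x (a + 1)) *
      ((∑ l ∈ Icc (a + 1) K, ps l) * (∑ l ∈ Icc (b + 1) K, pt l) -
        (∑ l ∈ Icc (b + 1) K, ps l) * (∑ l ∈ Icc (a + 1) K, pt l)) := by
    rcases hbK.eq_or_lt with rfl | hbK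
    · simp
    · refine mul_nonneg (sub_nonneg.2 (hx ⟨by omega, by omega⟩ ⟨by omega, hbK⟩ (by omega)))
        (sub_nonneg.2 ?_)
      linarith [hazard (b + 1) (a + 1) (by omega) (by omega) hbK]
  linear_combination key

theorem stmt_14_general (K : ℕ) (x ps pt : ℕ → ℝ)
    (hxlt : ∀ i, 1 ≤ i → i < K → x i < x (i + 1))
    (hps : ∀ i, 1 ≤ i → i ≤ K → 0 < ps i)
    (hpt : ∀ i, 1 ≤ i → i ≤ K → 0 < pt i)
    (gs hs hbars wbars : ℕ → ℝ)
    (hgs : ∀ i ≤ K, gs i = ∑ j ∈ Finset.Icc 1 i, ps j)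
    (hhs : ∀ i ≤ K, hs i = -x (i + 1) * ∑ j ∈ Finset.Icc (i + 1) K, ps j)
    (hbars_min : ∀ i ≤ K, IsLeast {y : ℝ |
        ((gs i, y) : ℝ × ℝ) ∈ convexHull ℝ {P : ℝ × ℝ | ∃ j ≤ K, P = (gs j, hs j)}}
      (hbars i))
    (hwbars : ∀ i, 1 ≤ i → i ≤ K →
      wbars i = (hbars i - hbars (i - 1)) / (gs i - gs (i - 1)))
    (gt ht hbart wbart : ℕ → ℝ)
    (hgt : ∀ i ≤ K, gt i = ∑ j ∈ Finset.Icc 1 i, pt j)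
    (hht : ∀ i ≤ K, ht i = -x (i + 1) * ∑ j ∈ Finset.Icc (i + 1) K, pt j)
    (hbart_min : ∀ i ≤ K, IsLeast {y : ℝ |
        ((gt i, y) : ℝ × ℝ) ∈ convexHull ℝ {P : ℝ × ℝ | ∃ j ≤ K, P = (gt j, ht j)}}
      (hbart i))
    (hwbart : ∀ i, 1 ≤ i → i ≤ K →
      wbart i = (hbart i - hbart (i - 1)) / (gt i - gt (i - 1)))
    (hazard : ∀ i j, 1 ≤ j → j ≤ i → i ≤ K →
      (∑ l ∈ Finset.Icc i K, ps l) * (∑ l ∈ Finset.Icc j K, pt l) ≤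
        (∑ l ∈ Finset.Icc i K, pt l) * (∑ l ∈ Finset.Icc j K, ps l)) :
    ∀ i, 1 ≤ i → i ≤ K → wbars i ≥ wbart i := by
  intro i hi hiK
  obtain ⟨j, rfl⟩ : ∃ j, i = j + 1 := ⟨i - 1, by omega⟩
  have hGs := strictMonoOn_of_partialSum hps hgs
  have hGt := strictMonoOn_of_partialSum hpt hgt
  have hx : MonotoneOn x (Set.Icc 1 K) := (strictMonoOn_of_lt_add_one Set.ordConnected_Icc
    fun a _ ha ha' => hxlt a ha.1 (Nat.lt_of_succ_le ha'.2)).monotoneOn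
  obtain ⟨b, hjb, hbK, hb⟩ := IsLowerEnvelope.exists_contact_ge hbars_min hGs hiK
    (by simpa using hwbars (j + 1) hi hiK)
  obtain ⟨a, haj, ha⟩ := IsLowerEnvelope.exists_contact_le hbart_min hGt hiK
    (by simpa using hwbart (j + 1) hi hiK)
  have hab : a < b := by omega
  have hgs_pos : 0 < gs b - gs a :=
    sub_pos.2 (hGs (Set.mem_Iic.2 (by omega)) (Set.mem_Iic.2 hbK) hab)
  have hgt_pos : 0 < gt b - gt a :=
    sub_pos.2 (hGt (Set.mem_Iic.2 (by omega)) (Set.mem_Iic.2 hbK) hab)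
  refine le_of_mul_le_mul_right ?_ (mul_pos hgt_pos hgs_pos)
  calc wbart (j + 1) * ((gt b - gt a) * (gs b - gs a))
      = wbart (j + 1) * (gt b - gt a) * (gs b - gs a) := by ring
    _ ≤ (ht b - ht a) * (gs b - gs a) := mul_le_mul_of_nonneg_right (ha b hbK) hgs_pos.le
    _ ≤ (hs b - hs a) * (gt b - gt a) := cross_le_of_hazard hx hgs hhs hgt hht hazard hab hbK
    _ ≤ wbars (j + 1) * (gs b - gs a) * (gt b - gt a) :=
        mul_le_mul_of_nonneg_right (hb a (by omega)) hgt_pos.le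
    _ = wbars (j + 1) * ((gt b - gt a) * (gs b - gs a)) := by ring

/-- Under the hazard rate order between the probability vectors
p_s and p_t, the monotone virtual valuations satisfy w̄_s^i ≥ w̄_t^i for all
1 ≤ i ≤ K. -/
theorem stmt_14 (K : ℕ) (hK : 1 ≤ K) (x ps pt : ℕ → ℝ)
    (hx0 : 0 ≤ x 1)
    (hxlt : ∀ i, 1 ≤ i → i < K → x i < x (i + 1))
    (hps : ∀ i, 1 ≤ i → i ≤ K → 0 < ps i)
    (hps1 : ∑ i ∈ Finset.Icc 1 K, ps i = 1)
    (hpt : ∀ i, 1 ≤ i → i ≤ K → 0 < pt i)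
    (hpt1 : ∑ i ∈ Finset.Icc 1 K, pt i = 1)
    (gs hs hbars wbars : ℕ → ℝ)
    (hgs : ∀ i ≤ K, gs i = ∑ j ∈ Finset.Icc 1 i, ps j)
    (hhs : ∀ i ≤ K, hs i = -x (i + 1) * ∑ j ∈ Finset.Icc (i + 1) K, ps j)
    (hbars_min : ∀ i ≤ K, IsLeast {y : ℝ |
        ((gs i, y) : ℝ × ℝ) ∈ convexHull ℝ {P : ℝ × ℝ | ∃ j ≤ K, P = (gs j, hs j)}}
      (hbars i))
    (hwbars : ∀ i, 1 ≤ i → i ≤ K →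
      wbars i = (hbars i - hbars (i - 1)) / (gs i - gs (i - 1)))
    (gt ht hbart wbart : ℕ → ℝ)
    (hgt : ∀ i ≤ K, gt i = ∑ j ∈ Finset.Icc 1 i, pt j)
    (hht : ∀ i ≤ K, ht i = -x (i + 1) * ∑ j ∈ Finset.Icc (i + 1) K, pt j)
    (hbart_min : ∀ i ≤ K, IsLeast {y : ℝ |
        ((gt i, y) : ℝ × ℝ) ∈ convexHull ℝ {P : ℝ × ℝ | ∃ j ≤ K, P = (gt j, ht j)}}
      (hbart i))
    (hwbart : ∀ i, 1 ≤ i → i ≤ K →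
      wbart i = (hbart i - hbart (i - 1)) / (gt i - gt (i - 1)))
    (hazard : ∀ i j, 1 ≤ j → j ≤ i → i ≤ K →
      (∑ l ∈ Finset.Icc i K, ps l) * (∑ l ∈ Finset.Icc j K, pt l) ≤
        (∑ l ∈ Finset.Icc i K, pt l) * (∑ l ∈ Finset.Icc j K, ps l)) :
    ∀ i, 1 ≤ i → i ≤ K → wbars i ≥ wbart i :=
  stmt_14_general K x ps pt hxlt hps hpt gs hs hbars wbars hgs hhs hbars_min hwbars gt ht hbart
    wbart hgt hht hbart_min hwbart hazard
end
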